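/- In the well-mixed closed system with Langmuir kinetics, the pair (c(t), m(t)) with A c' = -S f(c,m), m' = f(c,m), f(c,m) = k_a c (1 - m/m_∞) - k_d m, c(0) = c₀ > 0, m(0) = 0, satisfies c(t) ≥ 0 and 0 ≤ m(t) ≤ min(m_∞, A c₀/S) for all t ≥ 0. -/

import Mathlib

/-!
The rate `f` only exchanges mass between bulk and surface, so `A c + S m` is conserved and
`c = c₀ - (S / A) m`. Along this line `f` is positive at `m = 0` and negative at
`m = min m_∞ (A c₀ / S)`, where one of the factors `c` and `1 - m / m_∞` vanishes. Hence `m`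
can cross neither level, and `m ≤ A c₀ / S` is `c ≥ 0`.
-/

lemma le_of_hasDerivAt_neg_of_eq {u u' : ℝ → ℝ} {a M : ℝ}
    (hu : ∀ t, a ≤ t → HasDerivAt u (u' t) t) (ha : u a ≤ M)
    (hM : ∀ t, a ≤ t → u t = M → u' t < 0) (t : ℝ) (ht : a ≤ t) : u t ≤ M :=
  image_le_of_deriv_right_lt_deriv_boundary' (B := fun _ ↦ M)
    (fun x hx ↦ (hu x hx.1).continuousAt.continuousWithinAt)
    (fun x hx ↦ (hu x hx.1).hasDerivWithinAt) ha continuousOn_const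
    (fun _ _ ↦ hasDerivWithinAt_const _ _ _) (fun x hx ↦ hM x hx.1) ⟨ht, le_rfl⟩

lemma eq_of_hasDerivAt_zero {u : ℝ → ℝ} {a : ℝ} (hu : ∀ t, a ≤ t → HasDerivAt u 0 t)
    (t : ℝ) (ht : a ≤ t) : u t = u a :=
  constant_of_has_deriv_right_zero (fun x hx ↦ (hu x hx.1).continuousAt.continuousWithinAt)
    (fun x hx ↦ (hu x hx.1).hasDerivWithinAt) t ⟨ht, le_rfl⟩

lemma add_mul_eq_of_hasDerivAt_exchange {A S : ℝ} (hA : A ≠ 0) {c m r : ℝ → ℝ}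
    (hc : ∀ t, 0 ≤ t → HasDerivAt c (-(S / A) * r t) t)
    (hm : ∀ t, 0 ≤ t → HasDerivAt m (r t) t) (t : ℝ) (ht : 0 ≤ t) :
    A * c t + S * m t = A * c 0 + S * m 0 := by
  refine eq_of_hasDerivAt_zero (u := fun t ↦ A * c t + S * m t) (fun t ht ↦ ?_) t ht
  have hrate : A * (-(S / A) * r t) + S * r t = 0 := by field_simp; ring
  exact hrate ▸ ((hc t ht).const_mul A).add ((hm t ht).const_mul S)

lemma langmuir_rate_neg_at_saturation {A S k_a k_d m_inf c0 : ℝ} (hA : 0 < A) (hS : 0 < S)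
    (hkd : 0 < k_d) (hm : 0 < m_inf) (hc0 : 0 < c0) :
    let M := min m_inf (A * c0 / S)
    k_a * (c0 - S / A * M) * (1 - M / m_inf) - k_d * M < 0 := by
  intro M
  have hM : 0 < M := lt_min hm (by positivity)
  have hzero : (c0 - S / A * M) * (1 - M / m_inf) = 0 := by
    rcases min_choice m_inf (A * c0 / S) with h | h <;> simp only [M, h] <;> field_simp <;> ring
  linear_combination k_a * hzero + mul_pos hkd hM

theorem closed_system_langmuir_bounds (A S k_a k_d m_inf c0 : ℝ)
    (hA : 0 < A) (hS : 0 < S) (hka : 0 < k_a) (hkd : 0 < k_d)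
    (hm : 0 < m_inf) (hc0 : 0 < c0)
    (f : ℝ → ℝ → ℝ)
    (hf : ∀ x y, f x y = k_a * x * (1 - y / m_inf) - k_d * y)
    (c m : ℝ → ℝ)
    (hc : ∀ t, 0 ≤ t → HasDerivAt c (-(S / A) * f (c t) (m t)) t)
    (hm' : ∀ t, 0 ≤ t → HasDerivAt m (f (c t) (m t)) t)
    (hinit_c : c 0 = c0) (hinit_m : m 0 = 0) :
    ∀ t, 0 ≤ t → 0 ≤ c t ∧ 0 ≤ m t ∧ m t ≤ min m_inf (A * c0 / S) := by
  have hconc : ∀ t, 0 ≤ t → c t = c0 - S / A * m t := fun t ht ↦ by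
    have h := add_mul_eq_of_hasDerivAt_exchange hA.ne' hc hm' t ht
    rw [hinit_c, hinit_m] at h
    field_simp
    linarith
  have hlow : ∀ t, 0 ≤ t → -m t ≤ 0 :=
    le_of_hasDerivAt_neg_of_eq (fun t ht ↦ (hm' t ht).neg) (by simp [hinit_m])
      fun t ht hmt ↦ by
        rw [neg_eq_zero] at hmt
        simp [hf, hconc t ht, hmt, hka, hc0]
  have hup : ∀ t, 0 ≤ t → m t ≤ min m_inf (A * c0 / S) :=
    le_of_hasDerivAt_neg_of_eq hm' (by rw [hinit_m]; positivity) fun t ht hmt ↦ by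
      rw [hf, hconc t ht, hmt]
      exact langmuir_rate_neg_at_saturation hA hS hkd hm hc0
  refine fun t ht ↦ ⟨?_, neg_nonpos.mp (hlow t ht), hup t ht⟩
  have hmc : m t ≤ A * c0 / S := (hup t ht).trans (min_le_right _ _)
  rw [hconc t ht, sub_nonneg, ← le_div_iff₀' (by positivity), div_div_eq_mul_div, mul_comm c0]
  exact hmc
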